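/- arXiv:2103.04252 — 3 statements merged into one kernel-verified Lean document; each statement's English description precedes it below -/
import Mathlib

section
/- Let K be a finite simplicial complex with vertex set V, f, g : V → ℝ arbitrary, and h : V → ℝ nowhere vanishing. Define φ : Cₙ(K;ℝ) → Cₙ(K;ℝ) on basis n-simplices by φ({v₀,…,vₙ}) = (h(v₀)h(v₁)⋯h(vₙ))⁻¹ {v₀,…,vₙ}, extended linearly. Then φ is a chain map from the chain complex with f-weighted boundary ∂ⁿᶠ to the chain complex with (fh)-weighted boundary ∂ⁿᶠʰ, i.e., ∂ₙᶠʰ ∘ φ = φ ∘ ∂ₙᶠ for all n. -/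
open Finset

variable {V : Type} [Fintype V] [LinearOrder V]

/-- `K` is an abstract simplicial complex: simplices are nonempty and
`K` is closed under nonempty subsets. -/
def IsComplex (K : Finset (Finset V)) : Prop :=
  ∀ σ ∈ K, σ.Nonempty ∧ ∀ τ ⊆ σ, τ.Nonempty → τ ∈ K

/-- Coefficient of `τ` in the `f`-weighted boundary of the simplex `σ`:
`∂ᶠ σ = Σᵢ (-1)ⁱ f(vᵢ) (σ \ vᵢ)` with the vertices of `σ` in increasing order. -/
noncomputable def bdCoef (f : V → ℝ) (τ σ : Finset V) : ℝ :=
  ∑ i : Fin (σ.sort (· ≤ ·)).length,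
    if τ = σ.erase ((σ.sort (· ≤ ·)).get i)
    then (-1 : ℝ) ^ (i : ℕ) * f ((σ.sort (· ≤ ·)).get i) else 0

/-- The `f`-weighted boundary operator on the free vector space on all simplices. -/
noncomputable def wbd (f : V → ℝ) : (Finset V → ℝ) →ₗ[ℝ] (Finset V → ℝ) :=
  (Matrix.of (bdCoef f)).mulVecLin

/-- `Cₙ(K;ℝ)`: the span of the `n`-simplices of `K`. -/
noncomputable def chainSp (K : Finset (Finset V)) (n : ℕ) : Submodule ℝ (Finset V → ℝ) :=
  Submodule.span ℝ {x | ∃ σ ∈ K, σ.card = n + 1 ∧ x = Pi.single σ (1 : ℝ)}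

/-- The `g`-weighted bilinear form `⟨σ,τ⟩_g = g(σ)g(τ)δ(σ,τ)`, extended bilinearly. -/
noncomputable def wB (g : V → ℝ) (a b : Finset V → ℝ) : ℝ :=
  ∑ σ : Finset V, (∏ v ∈ σ, g v) ^ 2 * a σ * b σ

/-- `K_g^×`: the simplices of `K` whose `g`-weight is nonzero. -/
noncomputable def posPart (K : Finset (Finset V)) (g : V → ℝ) : Finset (Finset V) :=
  K.filter (fun σ => (∏ v ∈ σ, g v) ≠ 0)

/-- `n`-cycles of the `f`-weighted chain complex of `K`. -/
noncomputable def cycles (K : Finset (Finset V)) (f : V → ℝ) (n : ℕ) :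
    Submodule ℝ (Finset V → ℝ) :=
  chainSp K n ⊓ LinearMap.ker (wbd f)

/-- `n`-boundaries of the `f`-weighted chain complex of `K`. -/
noncomputable def bdries (K : Finset (Finset V)) (f : V → ℝ) (n : ℕ) :
    Submodule ℝ (Finset V → ℝ) :=
  Submodule.map (wbd f) (chainSp K (n + 1))

/-- The `n`-th `f`-weighted homology `Hₙ(K,f;ℝ) = Ker ∂ₙᶠ / Im ∂ₙ₊₁ᶠ`. -/
noncomputable abbrev wH (K : Finset (Finset V)) (f : V → ℝ) (n : ℕ) :=
  ↥(cycles K f n) ⧸ Submodule.comap (cycles K f n).subtype (bdries K f n)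

/-- The rescaling chain map `σ ↦ (Π_{v∈σ} h(v))⁻¹ σ`. -/
noncomputable def resc (h : V → ℝ) : (Finset V → ℝ) →ₗ[ℝ] (Finset V → ℝ) :=
  (Matrix.diagonal fun σ => (∏ v ∈ σ, h v)⁻¹).mulVecLin

/-
Removing a vertex `v` from `σ` multiplies the rescaling factor `(∏_{w∈σ} h w)⁻¹` by `h v`, which is
exactly the extra factor `h v` that the `fh`-weighted boundary attaches to the face `σ \ v`.
Hence the boundary matrix of `fh`, conjugated by the diagonal rescaling matrix, is the boundary
matrix of `f`.
-/

theorem mul_inv_prod_eq_inv_prod_erase {ι K : Type*} [DecidableEq ι] [Field K] {h : ι → K}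
    {σ : Finset ι} {v : ι} (hv : h v ≠ 0) (hvσ : v ∈ σ) :
    h v * (∏ w ∈ σ, h w)⁻¹ = (∏ w ∈ σ.erase v, h w)⁻¹ := by
  rw [← mul_prod_erase σ h hvσ, mul_inv, ← mul_assoc, mul_inv_cancel₀ hv, one_mul]

omit [Fintype V] in
theorem bdCoef_mul_mul_inv_prod (f : V → ℝ) {h : V → ℝ} (hh : ∀ v, h v ≠ 0) (τ σ : Finset V) :
    bdCoef (fun v => f v * h v) τ σ * (∏ v ∈ σ, h v)⁻¹ = (∏ v ∈ τ, h v)⁻¹ * bdCoef f τ σ := by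
  unfold bdCoef
  rw [sum_mul, mul_sum]
  refine sum_congr rfl fun i _ => ?_
  have hvσ : (σ.sort (· ≤ ·)).get i ∈ σ := (mem_sort _).mp (List.get_mem _ _)
  split_ifs with hτ
  · rw [hτ, ← mul_inv_prod_eq_inv_prod_erase (hh _) hvσ]
    ring
  · simp

theorem boundaryMatrix_mul_mul_diagonal (f : V → ℝ) {h : V → ℝ} (hh : ∀ v, h v ≠ 0) :
    Matrix.of (bdCoef fun v => f v * h v) * Matrix.diagonal (fun σ => (∏ v ∈ σ, h v)⁻¹) =
      Matrix.diagonal (fun σ => (∏ v ∈ σ, h v)⁻¹) * Matrix.of (bdCoef f) := by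
  ext τ σ
  simp only [Matrix.mul_diagonal, Matrix.diagonal_mul, Matrix.of_apply]
  exact bdCoef_mul_mul_inv_prod f hh τ σ

theorem wbd_mul_comp_resc (f : V → ℝ) {h : V → ℝ} (hh : ∀ v, h v ≠ 0) :
    wbd (fun v => f v * h v) ∘ₗ resc h = resc h ∘ₗ wbd f := by
  simp only [wbd, resc, ← Matrix.mulVecLin_mul, boundaryMatrix_mul_mul_diagonal f hh]

theorem stmt8_general (K : Finset (Finset V)) (f h : V → ℝ)
    (hh : ∀ v : V, h v ≠ 0) :
    ∀ n : ℕ, ∀ c ∈ chainSp K n,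
      wbd (fun v => f v * h v) (resc h c) = resc h (wbd f c) :=
  fun _ c _ => LinearMap.congr_fun (wbd_mul_comp_resc f hh) c

/-- The rescaling map `φ(σ) = (Π_{v∈σ} h(v))⁻¹ σ` is a chain map from the
`f`-weighted chain complex of `K` to the `fh`-weighted one: `∂ᶠʰ ∘ φ = φ ∘ ∂ᶠ`. -/
theorem stmt8 (K : Finset (Finset V)) (hK : IsComplex K) (f h : V → ℝ)
    (hh : ∀ v : V, h v ≠ 0) :
    ∀ n : ℕ, ∀ c ∈ chainSp K n,
      wbd (fun v => f v * h v) (resc h c) = resc h (wbd f c) :=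
  stmt8_general K f h hh
end

section
/- Let K be a finite simplicial complex with vertex set V, f, g : V → ℝ, and h : V → ℝ nowhere vanishing. Then for each n ≥ 0 the chain isomorphism φ(σ) = (Π_{v∈σ} h(v))⁻¹ σ induces a linear isomorphism φ* : Hₙ(K, f, g; ℝ) → Hₙ(K, fh, gh; ℝ) between the f-weighted and (fh)-weighted homology groups, defined by φ*([c]) = [φ(c)]. -/
/-!
Rescaling every simplex `σ` by `(∏_{v ∈ σ} h v)⁻¹` intertwines `∂ᶠ` with `∂ᶠʰ`, since the face
obtained by dropping `v` loses precisely the factor `h v`. As `h` vanishes nowhere, this rescaling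
is a linear automorphism of the chain space that preserves each `Cₙ(K)`; hence it carries
cycles onto cycles and boundaries onto boundaries, and so induces an isomorphism of the
subquotients.
-/

open Finset

variable {V : Type} [Fintype V] [LinearOrder V]

section Subquotient

variable {R M M' : Type*} [Ring R] [AddCommGroup M] [Module R M] [AddCommGroup M'] [Module R M']

lemma Submodule.map_ofSubmodules_comap_subtype (e : M ≃ₗ[R] M') {Z : Submodule R M}
    {Z' : Submodule R M'} (hZ : Z.map (e : M →ₗ[R] M') = Z') (B : Submodule R M) :
    (B.comap Z.subtype).map (e.ofSubmodules Z Z' hZ : Z →ₗ[R] Z') =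
      (B.map (e : M →ₗ[R] M')).comap Z'.subtype := by
  ext x
  simp only [Submodule.mem_map_equiv, Submodule.mem_comap, Submodule.subtype_apply,
    LinearEquiv.ofSubmodules_symm_apply]

lemma exists_subquotient_equiv_of_map_eq (e : M ≃ₗ[R] M') {Z B : Submodule R M}
    {Z' B' : Submodule R M'} (hZ : Z.map (e : M →ₗ[R] M') = Z')
    (hB : B.map (e : M →ₗ[R] M') = B') :
    ∃ e' : (Z ⧸ B.comap Z.subtype) ≃ₗ[R] (Z' ⧸ B'.comap Z'.subtype),
      ∀ (c : Z) (c' : Z'), e c = c' →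
        e' (Submodule.Quotient.mk c) = Submodule.Quotient.mk c' := by
  refine ⟨Submodule.Quotient.equiv _ _ (e.ofSubmodules Z Z' hZ)
    (hB ▸ Submodule.map_ofSubmodules_comap_subtype e hZ B), fun c c' hc => ?_⟩
  have : e.ofSubmodules Z Z' hZ c = c' := Subtype.ext hc
  rw [← this]
  rfl

end Subquotient

namespace WeightedHomology

@[simp]
lemma resc_apply (h : V → ℝ) (x : Finset V → ℝ) (σ : Finset V) :
    resc h x σ = (∏ v ∈ σ, h v)⁻¹ * x σ := by
  simp [resc, Matrix.mulVec_diagonal]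

lemma resc_comp_resc (h₁ h₂ : V → ℝ) :
    resc h₁ ∘ₗ resc h₂ = resc fun v => h₁ v * h₂ v := by
  refine LinearMap.ext fun x => funext fun σ => ?_
  simp only [LinearMap.comp_apply, resc_apply, Finset.prod_mul_distrib, mul_inv]
  ring

lemma resc_one : resc (fun _ : V => (1 : ℝ)) = LinearMap.id := by
  refine LinearMap.ext fun x => funext fun σ => ?_
  simp

lemma resc_comp_resc_inv {h : V → ℝ} (hh : ∀ v, h v ≠ 0) :
    resc h ∘ₗ resc (fun v => (h v)⁻¹) = LinearMap.id := by
  simp [resc_comp_resc, mul_inv_cancel₀ (hh _), resc_one]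

lemma resc_inv_comp_resc {h : V → ℝ} (hh : ∀ v, h v ≠ 0) :
    resc (fun v => (h v)⁻¹) ∘ₗ resc h = LinearMap.id := by
  simp [resc_comp_resc, inv_mul_cancel₀ (hh _), resc_one]

noncomputable def rescEquiv {h : V → ℝ} (hh : ∀ v, h v ≠ 0) :
    (Finset V → ℝ) ≃ₗ[ℝ] (Finset V → ℝ) :=
  .ofLinearMap (resc h) (resc fun v => (h v)⁻¹) (resc_comp_resc_inv hh) (resc_inv_comp_resc hh)

@[simp]
lemma coe_rescEquiv {h : V → ℝ} (hh : ∀ v, h v ≠ 0) :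
    (rescEquiv hh : (Finset V → ℝ) →ₗ[ℝ] (Finset V → ℝ)) = resc h :=
  rfl

lemma resc_single (h : V → ℝ) (σ : Finset V) :
    resc h (Pi.single σ 1) = (∏ v ∈ σ, h v)⁻¹ • Pi.single σ 1 := by
  ext τ
  rcases eq_or_ne τ σ with rfl | hne
  · simp
  · simp [hne]

lemma map_resc_chainSp_le (K : Finset (Finset V)) (h : V → ℝ) (n : ℕ) :
    (chainSp K n).map (resc h) ≤ chainSp K n := by
  rw [chainSp, Submodule.map_span_le]
  rintro _ ⟨σ, hσ, hcard, rfl⟩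
  rw [resc_single]
  exact Submodule.smul_mem _ _ (Submodule.subset_span ⟨σ, hσ, hcard, rfl⟩)

lemma map_resc_chainSp (K : Finset (Finset V)) {h : V → ℝ} (hh : ∀ v, h v ≠ 0) (n : ℕ) :
    (chainSp K n).map (resc h) = chainSp K n := by
  refine le_antisymm (map_resc_chainSp_le K h n) ?_
  calc chainSp K n = ((chainSp K n).map (resc fun v => (h v)⁻¹)).map (resc h) := by
        rw [← Submodule.map_comp, resc_comp_resc_inv hh, Submodule.map_id]
    _ ≤ (chainSp K n).map (resc h) := Submodule.map_mono (map_resc_chainSp_le K _ n)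

omit [Fintype V] in
-- Each face of `σ` drops one vertex `v`, and `∏_σ h = h v * ∏_{σ.erase v} h`: the extra factor
-- `h v` is exactly the one carried by the weight `f v * h v`.
lemma bdCoef_mul_inv_prod (f : V → ℝ) {h : V → ℝ} (hh : ∀ v, h v ≠ 0) (τ σ : Finset V) :
    bdCoef (fun v => f v * h v) τ σ * (∏ v ∈ σ, h v)⁻¹
      = (∏ v ∈ τ, h v)⁻¹ * bdCoef f τ σ := by
  rw [bdCoef, bdCoef, Finset.sum_mul, Finset.mul_sum]
  refine Finset.sum_congr rfl fun i _ => ?_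
  split_ifs with hτ
  · have hv : (σ.sort (· ≤ ·)).get i ∈ σ := (Finset.mem_sort _).1 (List.get_mem _ i)
    rw [hτ, ← Finset.mul_prod_erase σ h hv]
    have : ∏ w ∈ σ.erase ((σ.sort (· ≤ ·)).get i), h w ≠ 0 :=
      Finset.prod_ne_zero_iff.2 fun w _ => hh w
    field_simp [hh]
  · simp

lemma wbd_apply (f : V → ℝ) (x : Finset V → ℝ) (τ : Finset V) :
    wbd f x τ = ∑ σ, bdCoef f τ σ * x σ :=
  rfl

lemma wbd_mul_comp_resc (f : V → ℝ) {h : V → ℝ} (hh : ∀ v, h v ≠ 0) :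
    wbd (fun v => f v * h v) ∘ₗ resc h = resc h ∘ₗ wbd f := by
  refine LinearMap.ext fun x => funext fun τ => ?_
  simp only [LinearMap.comp_apply, wbd_apply, resc_apply, Finset.mul_sum]
  refine Finset.sum_congr rfl fun σ _ => ?_
  rw [← mul_assoc, ← mul_assoc, bdCoef_mul_inv_prod f hh]

lemma map_rescEquiv_ker_wbd (f : V → ℝ) {h : V → ℝ} (hh : ∀ v, h v ≠ 0) :
    (LinearMap.ker (wbd f)).map (rescEquiv hh : (Finset V → ℝ) →ₗ[ℝ] (Finset V → ℝ)) =
      LinearMap.ker (wbd fun v => f v * h v) := by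
  ext x
  rw [Submodule.mem_map_equiv, LinearMap.mem_ker, LinearMap.mem_ker,
    ← (rescEquiv hh).map_eq_zero_iff]
  conv_rhs => rw [← (rescEquiv hh).apply_symm_apply x]
  exact iff_of_eq (congrArg (· = 0) (LinearMap.congr_fun (wbd_mul_comp_resc f hh) _)).symm

lemma map_rescEquiv_cycles (K : Finset (Finset V)) (f : V → ℝ) {h : V → ℝ}
    (hh : ∀ v, h v ≠ 0) (n : ℕ) :
    (cycles K f n).map (rescEquiv hh : (Finset V → ℝ) →ₗ[ℝ] (Finset V → ℝ)) =
      cycles K (fun v => f v * h v) n := by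
  rw [cycles, cycles, Submodule.map_inf _ (rescEquiv hh).injective, map_rescEquiv_ker_wbd f hh,
    coe_rescEquiv, map_resc_chainSp K hh]

lemma map_rescEquiv_bdries (K : Finset (Finset V)) (f : V → ℝ) {h : V → ℝ}
    (hh : ∀ v, h v ≠ 0) (n : ℕ) :
    (bdries K f n).map (rescEquiv hh : (Finset V → ℝ) →ₗ[ℝ] (Finset V → ℝ)) =
      bdries K (fun v => f v * h v) n := by
  rw [bdries, bdries, coe_rescEquiv, ← Submodule.map_comp, ← wbd_mul_comp_resc f hh,
    Submodule.map_comp, map_resc_chainSp K hh]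

end WeightedHomology

open WeightedHomology in
theorem stmt10_general (K : Finset (Finset V)) (f h : V → ℝ)
    (hh : ∀ v : V, h v ≠ 0) (n : ℕ) :
    ∃ e : wH K f n ≃ₗ[ℝ] wH K (fun v => f v * h v) n,
      ∀ (c : ↥(cycles K f n)) (c' : ↥(cycles K (fun v => f v * h v) n)),
        resc h (c : Finset V → ℝ) = (c' : Finset V → ℝ) →
        e (Submodule.Quotient.mk c) = Submodule.Quotient.mk c' :=
  exists_subquotient_equiv_of_map_eq (rescEquiv hh) (map_rescEquiv_cycles K f hh n)
    (map_rescEquiv_bdries K f hh n)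

/-- The chain isomorphism `φ(σ) = (Π_{v∈σ} h(v))⁻¹ σ` induces a linear isomorphism
`φ* : Hₙ(K,f,g;ℝ) → Hₙ(K,fh,gh;ℝ)`, `φ*([c]) = [φ(c)]`. -/
theorem stmt10 (K : Finset (Finset V)) (hK : IsComplex K) (f g h : V → ℝ)
    (hh : ∀ v : V, h v ≠ 0) (n : ℕ) :
    ∃ e : wH K f n ≃ₗ[ℝ] wH K (fun v => f v * h v) n,
      ∀ (c : ↥(cycles K f n)) (c' : ↥(cycles K (fun v => f v * h v) n)),
        resc h (c : Finset V → ℝ) = (c' : Finset V → ℝ) →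
        e (Submodule.Quotient.mk c) = Submodule.Quotient.mk c' :=
  stmt10_general K f h hh n
end

section
/- Let K be a finite simplicial complex with vertex set V and f : V → ℝ nowhere vanishing. Then for each n ≥ 0, the f-weighted homology Hₙ(K, f, f; ℝ) (taking both weights equal to f) is linearly isomorphic to the ordinary simplicial homology Hₙ(K; ℝ) with real coefficients. -/
open Finset

variable {V : Type} [Fintype V] [LinearOrder V]

/-!
A vertex weighting only rescales the boundary coefficients: the coefficient of `σ \ {v}` in
`∂ᶠ σ` is `±f(v)`, and `∏_{σ} f = f(v) · ∏_{σ \ {v}} f`. Hence the diagonal rescaling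
`σ ↦ (∏_{v∈σ} f v) σ` (that is, `resc f⁻¹`) intertwines `∂ᶠ` with the unweighted boundary.
For nowhere-vanishing `f` it is invertible and preserves each chain space `Cₙ(K)`, so it maps
cycles onto cycles and boundaries onto boundaries and descends to an isomorphism on homology.
-/

section Subquotient

variable {R M N : Type*} [Ring R] [AddCommGroup M] [Module R M] [AddCommGroup N] [Module R N]

theorem LinearEquiv.map_submoduleMap_comap_subtype (e : M ≃ₗ[R] N) (Z B : Submodule R M) :
    (Submodule.comap Z.subtype B).map (e.submoduleMap Z : Z →ₗ[R] Z.map (e : M →ₗ[R] N)) =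
      Submodule.comap (Z.map (e : M →ₗ[R] N)).subtype (B.map (e : M →ₗ[R] N)) := by
  ext ⟨x, hx⟩
  simp only [Submodule.mem_map, Submodule.mem_comap, Submodule.subtype_apply]
  constructor
  · rintro ⟨y, hy, hyx⟩
    exact ⟨y, hy, congrArg Subtype.val hyx⟩
  · rintro ⟨y, hy, rfl⟩
    obtain ⟨z, hz, hzy⟩ := hx
    obtain rfl : z = y := e.injective hzy
    exact ⟨⟨z, hz⟩, hy, rfl⟩

noncomputable def LinearEquiv.subquotientCongr (e : M ≃ₗ[R] N) {Z B : Submodule R M}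
    {Z' B' : Submodule R N} (hZ : Z.map (e : M →ₗ[R] N) = Z')
    (hB : B.map (e : M →ₗ[R] N) = B') :
    (Z ⧸ Submodule.comap Z.subtype B) ≃ₗ[R] (Z' ⧸ Submodule.comap Z'.subtype B') := by
  subst hZ hB
  exact Submodule.Quotient.equiv _ _ (e.submoduleMap Z) (e.map_submoduleMap_comap_subtype Z B)

theorem LinearEquiv.map_ker_of_comp_eq (e : M ≃ₗ[R] N) {A : M →ₗ[R] M} {B : N →ₗ[R] N}
    (h : B ∘ₗ (e : M →ₗ[R] N) = (e : M →ₗ[R] N) ∘ₗ A) :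
    (LinearMap.ker A).map (e : M →ₗ[R] N) = LinearMap.ker B := by
  rw [Submodule.map_equiv_eq_comap_symm, ← LinearMap.ker_comp, ← e.ker_comp (A ∘ₗ _),
    ← LinearMap.comp_assoc, ← h, LinearMap.comp_assoc, e.comp_symm, LinearMap.comp_id]

end Subquotient

noncomputable def wHCongr {K : Finset (Finset V)} {f g : V → ℝ}
    (e : (Finset V → ℝ) ≃ₗ[ℝ] (Finset V → ℝ))
    (he : ∀ n, (chainSp K n).map (e : (Finset V → ℝ) →ₗ[ℝ] _) = chainSp K n)
    (hbd : wbd g ∘ₗ (e : (Finset V → ℝ) →ₗ[ℝ] _) = (e : (Finset V → ℝ) →ₗ[ℝ] _) ∘ₗ wbd f)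
    (n : ℕ) : wH K f n ≃ₗ[ℝ] wH K g n :=
  e.subquotientCongr
    (by rw [cycles, cycles, Submodule.map_inf _ e.injective, he, e.map_ker_of_comp_eq hbd])
    (by rw [bdries, bdries, ← Submodule.map_comp, ← hbd, Submodule.map_comp, he])

theorem bdCoef_mul_diagonal_prod (g w : V → ℝ) :
    Matrix.of (bdCoef g) * Matrix.diagonal (fun σ => ∏ v ∈ σ, w v) =
      Matrix.diagonal (fun σ => ∏ v ∈ σ, w v) * Matrix.of (bdCoef (g * w)) := by
  ext τ σ
  simp only [Matrix.mul_diagonal, Matrix.diagonal_mul, Matrix.of_apply, bdCoef, Finset.sum_mul,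
    Finset.mul_sum]
  refine Finset.sum_congr rfl fun i _ => ?_
  split_ifs with hτ
  · have hv : (σ.sort (· ≤ ·)).get i ∈ σ := (Finset.mem_sort _).1 (List.get_mem _ i)
    rw [hτ, ← Finset.mul_prod_erase σ w hv, Pi.mul_apply]
    ring
  · simp

theorem wbd_comp_resc (g h : V → ℝ) : wbd g ∘ₗ resc h = resc h ∘ₗ wbd (g / h) := by
  have hdiag : (fun σ : Finset V => (∏ v ∈ σ, h v)⁻¹) = fun σ => ∏ v ∈ σ, h⁻¹ v := by
    simp only [Pi.inv_apply, Finset.prod_inv_distrib]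
  rw [wbd, wbd, resc, ← Matrix.mulVecLin_mul, ← Matrix.mulVecLin_mul, hdiag, div_eq_mul_inv,
    bdCoef_mul_diagonal_prod]

theorem resc_comp_resc (h k : V → ℝ) : resc h ∘ₗ resc k = resc (h * k) := by
  simp only [resc, ← Matrix.mulVecLin_mul, Matrix.diagonal_mul_diagonal, Pi.mul_apply,
    Finset.prod_mul_distrib, mul_inv]

theorem resc_one : resc (1 : V → ℝ) = LinearMap.id := by
  simp [resc]

noncomputable def rescEquiv (h : V → ℝ) (hh : ∀ v, h v ≠ 0) :
    (Finset V → ℝ) ≃ₗ[ℝ] (Finset V → ℝ) :=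
  LinearEquiv.ofLinearMap (resc h) (resc h⁻¹)
    (by rw [resc_comp_resc, ← resc_one]; congr 1; ext v; exact mul_inv_cancel₀ (hh v))
    (by rw [resc_comp_resc, ← resc_one]; congr 1; ext v; exact inv_mul_cancel₀ (hh v))

theorem resc_single (h : V → ℝ) (σ : Finset V) :
    resc h (Pi.single σ 1) = (∏ v ∈ σ, h v)⁻¹ • Pi.single σ (1 : ℝ) := by
  simp [resc, ← Pi.single_smul]

theorem map_resc_chainSp_le (h : V → ℝ) (K : Finset (Finset V)) (n : ℕ) :
    (chainSp K n).map (resc h) ≤ chainSp K n := by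
  rw [chainSp, Submodule.map_span_le]
  rintro _ ⟨σ, hσ, hcard, rfl⟩
  rw [resc_single]
  exact Submodule.smul_mem _ _ (Submodule.subset_span ⟨σ, hσ, hcard, rfl⟩)

theorem map_rescEquiv_chainSp (h : V → ℝ) (hh : ∀ v, h v ≠ 0) (K : Finset (Finset V))
    (n : ℕ) : (chainSp K n).map (rescEquiv h hh : (Finset V → ℝ) →ₗ[ℝ] _) = chainSp K n := by
  refine le_antisymm (map_resc_chainSp_le h K n) ?_
  rw [Submodule.map_equiv_eq_comap_symm, ← Submodule.map_le_iff_le_comap]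
  exact map_resc_chainSp_le h⁻¹ K n

theorem stmt11_general (K : Finset (Finset V)) (f : V → ℝ)
    (hf : ∀ v : V, f v ≠ 0) (n : ℕ) :
    Nonempty (wH K f n ≃ₗ[ℝ] wH K (fun _ => (1 : ℝ)) n) := by
  have hf_inv : ∀ v, f⁻¹ v ≠ 0 := fun v => inv_ne_zero (hf v)
  have hbd := wbd_comp_resc (fun _ => (1 : ℝ)) f⁻¹
  rw [show (fun _ => (1 : ℝ)) / f⁻¹ = f by ext; simp] at hbd
  exact ⟨wHCongr (rescEquiv f⁻¹ hf_inv) (map_rescEquiv_chainSp f⁻¹ hf_inv K) hbd n⟩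

/-- For a nowhere-vanishing weight `f`, the weighted homology `Hₙ(K,f,f;ℝ)` is
linearly isomorphic to the ordinary simplicial homology `Hₙ(K;ℝ)` (the weighted
homology for the constant weight `1`). -/
theorem stmt11 (K : Finset (Finset V)) (hK : IsComplex K) (f : V → ℝ)
    (hf : ∀ v : V, f v ≠ 0) (n : ℕ) :
    Nonempty (wH K f n ≃ₗ[ℝ] wH K (fun _ => (1 : ℝ)) n) :=
  stmt11_general K f hf n
end
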